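/- arXiv:1408.2008 — 5 statements merged into one kernel-verified Lean document; each statement's English description precedes it below -/
import Mathlib

section
/- For all vectors a, b in ℝ³ with a ≠ 0 and b ≠ 0, cosh‖a + b‖ ≤ cosh‖a‖ · cosh‖b‖ + (⟨a,b⟩ / (‖a‖ · ‖b‖)) · sinh‖a‖ · sinh‖b‖, where ⟨a,b⟩ is the Euclidean inner product and ‖·‖ the Euclidean norm. -/
/-!
Write `x = ‖a‖`, `y = ‖b‖` and let `t = ⟨a,b⟩ / (x y) ∈ [-1, 1]`. Then
`‖a + b‖² = (1+t)/2 · (x+y)² + (1-t)/2 · (x-y)²` is a convex combination, and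
`u ↦ cosh √u` is convex on `[0, ∞)` because its derivative `sinh √u / (2√u)` increases
(equivalently `sinh r ≤ r cosh r`). Jensen's inequality for this combination, followed by the
addition formulas for `cosh (x ± y)`, gives the claim.
-/

open Real Set
open scoped InnerProductSpace

namespace Real

lemma sinh_le_mul_cosh {r : ℝ} (hr : 0 ≤ r) : sinh r ≤ r * cosh r := by
  have hderiv : ∀ x ∈ interior (Icc 0 r), deriv sinh x ≤ cosh r := by
    intro x hx
    rw [interior_Icc] at hx
    rw [deriv_sinh, cosh_le_cosh, abs_of_pos hx.1, abs_of_nonneg hr]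
    exact hx.2.le
  simpa [mul_comm] using (convex_Icc 0 r).image_sub_le_mul_sub_of_deriv_le
    continuous_sinh.continuousOn differentiable_sinh.differentiableOn hderiv
    0 ⟨le_rfl, hr⟩ r ⟨hr, le_rfl⟩ hr

lemma hasDerivAt_cosh_sqrt {u : ℝ} (hu : 0 < u) :
    HasDerivAt (fun v ↦ cosh √v) (sinh √u / (2 * √u)) u :=
  ((hasDerivAt_cosh √u).comp u (hasDerivAt_sqrt hu.ne')).congr_deriv (by ring)

lemma hasDerivAt_sinh_sqrt_div {u : ℝ} (hu : 0 < u) :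
    HasDerivAt (fun v ↦ sinh √v / (2 * √v)) ((√u * cosh √u - sinh √u) / (4 * u * √u)) u := by
  have hsqrt := hasDerivAt_sqrt hu.ne'
  have hr : 0 < √u := sqrt_pos.2 hu
  refine (((hasDerivAt_sinh √u).comp u hsqrt).div (hsqrt.const_mul 2)
    (by positivity)).congr_deriv ?_
  rw [Function.comp_apply, mul_pow, sq_sqrt hu.le]
  field_simp
  ring

lemma convexOn_cosh_sqrt : ConvexOn ℝ (Ici 0) fun u ↦ cosh √u := by
  refine convexOn_of_hasDerivWithinAt2_nonneg (convex_Ici 0)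
    (continuous_cosh.comp continuous_sqrt).continuousOn (f' := fun u ↦ sinh √u / (2 * √u))
    (f'' := fun u ↦ (√u * cosh √u - sinh √u) / (4 * u * √u)) ?_ ?_ ?_ <;>
    rw [interior_Ici] <;> rintro u (hu : 0 < u)
  · exact (hasDerivAt_cosh_sqrt hu).hasDerivWithinAt
  · exact (hasDerivAt_sinh_sqrt_div hu).hasDerivWithinAt
  · have := sinh_le_mul_cosh (sqrt_nonneg u)
    exact div_nonneg (by linarith) (by positivity)

lemma cosh_sqrt_le {t : ℝ} (ht : |t| ≤ 1) (x y : ℝ) :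
    cosh √(x ^ 2 + 2 * t * x * y + y ^ 2) ≤ cosh x * cosh y + t * sinh x * sinh y := by
  rw [abs_le] at ht
  calc cosh √(x ^ 2 + 2 * t * x * y + y ^ 2)
      = cosh √((1 + t) / 2 * (x + y) ^ 2 + (1 - t) / 2 * (x - y) ^ 2) := by congr 2; ring
    _ ≤ (1 + t) / 2 * cosh √((x + y) ^ 2) + (1 - t) / 2 * cosh √((x - y) ^ 2) := by
        simpa only [smul_eq_mul] using convexOn_cosh_sqrt.2 (mem_Ici.2 (sq_nonneg (x + y)))
          (mem_Ici.2 (sq_nonneg (x - y))) (by linarith : 0 ≤ (1 + t) / 2)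
          (by linarith : 0 ≤ (1 - t) / 2) (by ring)
    _ = (1 + t) / 2 * cosh (x + y) + (1 - t) / 2 * cosh (x - y) := by
        rw [sqrt_sq_eq_abs, sqrt_sq_eq_abs, cosh_abs, cosh_abs]
    _ = cosh x * cosh y + t * sinh x * sinh y := by
        rw [cosh_add, cosh_sub]
        ring

end Real

theorem cosh_norm_add_le {E : Type*} [NormedAddCommGroup E] [InnerProductSpace ℝ E] (a b : E) :
    cosh ‖a + b‖ ≤ cosh ‖a‖ * cosh ‖b‖ + (⟪a, b⟫_ℝ / (‖a‖ * ‖b‖)) * sinh ‖a‖ * sinh ‖b‖ := by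
  set t := ⟪a, b⟫_ℝ / (‖a‖ * ‖b‖)
  have hinner : ⟪a, b⟫_ℝ = t * ‖a‖ * ‖b‖ := by
    rcases eq_or_ne (‖a‖ * ‖b‖) 0 with h | h
    · -- then `t = 0` because division by zero returns `0`, and `a = 0` or `b = 0`
      rcases mul_eq_zero.1 h with h | h <;> simp_all
    · rw [mul_assoc, div_mul_cancel₀ _ h]
  have hnorm : ‖a + b‖ = √(‖a‖ ^ 2 + 2 * t * ‖a‖ * ‖b‖ + ‖b‖ ^ 2) := by
    rw [show 2 * t * ‖a‖ * ‖b‖ = 2 * ⟪a, b⟫_ℝ by rw [hinner]; ring, ← norm_add_sq_real,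
      sqrt_sq (norm_nonneg _)]
  rw [hnorm]
  exact cosh_sqrt_le (abs_real_inner_div_norm_mul_norm_le_one a b) _ _

theorem golden_thompson_two_by_two_general (a b : EuclideanSpace ℝ (Fin 3)) :
    Real.cosh ‖a + b‖ ≤ Real.cosh ‖a‖ * Real.cosh ‖b‖ +
      ((inner ℝ a b : ℝ) / (‖a‖ * ‖b‖)) * Real.sinh ‖a‖ * Real.sinh ‖b‖ :=
  cosh_norm_add_le a b

/-- The Golden–Thompson inequality for `2 × 2` traceless Hermitian matrices, written in terms of
the coefficient vectors with respect to the Pauli matrices: for nonzero `a, b ∈ ℝ³`,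
`cosh ‖a + b‖ ≤ cosh ‖a‖ cosh ‖b‖ + (⟨a,b⟩ / (‖a‖ ‖b‖)) sinh ‖a‖ sinh ‖b‖`. -/
theorem golden_thompson_two_by_two (a b : EuclideanSpace ℝ (Fin 3)) (ha : a ≠ 0) (hb : b ≠ 0) :
    Real.cosh ‖a + b‖ ≤ Real.cosh ‖a‖ * Real.cosh ‖b‖ +
      ((inner ℝ a b : ℝ) / (‖a‖ * ‖b‖)) * Real.sinh ‖a‖ * Real.sinh ‖b‖ :=
  golden_thompson_two_by_two_general a b
end

section
/- Let A and B be N×N complex Hermitian matrices and let k ≥ 0 be an integer. Then Tr((AB)^{2^k}) ≤ Tr(A^{2^k} B^{2^k}); both traces are real numbers. -/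
/-!
Write `m = 2^k` and consider, alongside the claim `Re Tr((AB)^m) ≤ Re Tr(A^m B^m)` for Hermitian
`A, B`, the companion inequality `Re Tr(X^{2m}) ≤ Re Tr((XᴴX)^m)` for arbitrary `X`. Both pass
from `m` to `2m` together. With `X = AB` the companion bound gives
`Re Tr((AB)^{2m}) ≤ Re Tr((BA²B)^m) = Re Tr((A²B²)^m)`, and the claim for `A², B²` finishes.
With `X²` in place of `X` it gives `Re Tr(X^{4m}) ≤ Re Tr((QP)^m)` for the Hermitian `Q = XᴴX`,
`P = XXᴴ`; the claim bounds this by `Re Tr(Q^m P^m)`, and since `Tr Q^{2m} = Tr P^{2m}`, the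
Cauchy–Schwarz inequality for the trace form bounds that by `Tr Q^{2m}`. At `m = 1` the companion
inequality is Cauchy–Schwarz again and the claim is an equality.
-/

open RCLike
open scoped ComplexOrder

namespace Matrix

section Trace

variable {m n R 𝕜 : Type*} [Fintype n] [RCLike 𝕜]

theorem trace_mul_pow_comm [DecidableEq n] [CommSemiring R] (M L : Matrix n n R) (s : ℕ) :
    ((M * L) ^ s).trace = ((L * M) ^ s).trace := by
  cases s with
  | zero => rfl
  | succ s =>
    rw [pow_succ, ← mul_assoc, mul_pow_mul, mul_assoc, trace_mul_comm, mul_assoc, ← pow_succ]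

theorem re_trace_conjTranspose_mul_self_nonneg [Fintype m] (M : Matrix m n 𝕜) :
    0 ≤ re (Mᴴ * M).trace :=
  (nonneg_iff.mp (posSemidef_conjTranspose_mul_self M).trace_nonneg).1

theorem re_trace_conjTranspose (M : Matrix n n 𝕜) : re Mᴴ.trace = re M.trace := by
  rw [trace_conjTranspose, star_def, conj_re]

theorem two_mul_re_trace_conjTranspose_mul_le [Fintype m] (M L : Matrix m n 𝕜) :
    2 * re (Mᴴ * L).trace ≤ re (Mᴴ * M).trace + re (Lᴴ * L).trace := by
  have h := re_trace_conjTranspose_mul_self_nonneg (M - L)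
  have hLM : re (Lᴴ * M).trace = re (Mᴴ * L).trace := by
    rw [← re_trace_conjTranspose, conjTranspose_mul, conjTranspose_conjTranspose]
  simp only [conjTranspose_sub, Matrix.sub_mul, Matrix.mul_sub, trace_sub, map_sub] at h
  linarith

theorem re_trace_mul_self_le (M : Matrix n n 𝕜) : re (M * M).trace ≤ re (Mᴴ * M).trace := by
  have h := two_mul_re_trace_conjTranspose_mul_le Mᴴ M
  rw [conjTranspose_conjTranspose, trace_mul_comm M Mᴴ] at h
  linarith

theorem IsHermitian.re_trace_mul_le {P Q : Matrix n n 𝕜} (hP : P.IsHermitian)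
    (hQ : Q.IsHermitian) (h : re (P * P).trace = re (Q * Q).trace) :
    re (P * Q).trace ≤ re (P * P).trace := by
  have h2 := two_mul_re_trace_conjTranspose_mul_le P Q
  rw [hP.eq, hQ.eq] at h2
  linarith

theorem IsHermitian.im_trace_mul_pow [DecidableEq n] {A B : Matrix n n 𝕜} (hA : A.IsHermitian)
    (hB : B.IsHermitian) (s : ℕ) : im ((A * B) ^ s).trace = 0 := by
  rw [← conj_eq_iff_im, ← star_def, ← trace_conjTranspose, conjTranspose_pow, conjTranspose_mul,
    hA.eq, hB.eq, trace_mul_pow_comm]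

end Trace

section TwoPow

variable (𝕜 n : Type*) [RCLike 𝕜] [Fintype n] [DecidableEq n]

def TraceMulPowLE (m : ℕ) : Prop :=
  ∀ A B : Matrix n n 𝕜, A.IsHermitian → B.IsHermitian →
    re ((A * B) ^ m).trace ≤ re (A ^ m * B ^ m).trace

def TracePowTwoMulLE (m : ℕ) : Prop :=
  ∀ X : Matrix n n 𝕜, re (X ^ (2 * m)).trace ≤ re ((Xᴴ * X) ^ m).trace

variable {𝕜 n} {m : ℕ}

theorem traceMulPowLE_one : TraceMulPowLE 𝕜 n 1 := by
  intro A B _ _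
  simp

theorem tracePowTwoMulLE_one : TracePowTwoMulLE 𝕜 n 1 := by
  intro X
  simpa [sq] using re_trace_mul_self_le X

theorem TraceMulPowLE.two_mul (hW : TracePowTwoMulLE 𝕜 n m) (hM : TraceMulPowLE 𝕜 n m) :
    TraceMulPowLE 𝕜 n (2 * m) := by
  intro A B hA hB
  calc re ((A * B) ^ (2 * m)).trace
      ≤ re (((A * B)ᴴ * (A * B)) ^ m).trace := hW (A * B)
    _ = re ((A ^ 2 * B ^ 2) ^ m).trace := by
      rw [conjTranspose_mul, hA.eq, hB.eq, show B * A * (A * B) = B * (A ^ 2 * B) by noncomm_ring,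
        trace_mul_pow_comm, mul_assoc, ← sq]
    _ ≤ re ((A ^ 2) ^ m * (B ^ 2) ^ m).trace := hM _ _ (hA.pow 2) (hB.pow 2)
    _ = re (A ^ (2 * m) * B ^ (2 * m)).trace := by rw [pow_mul, pow_mul]

theorem TracePowTwoMulLE.two_mul (hW : TracePowTwoMulLE 𝕜 n m) (hM : TraceMulPowLE 𝕜 n m) :
    TracePowTwoMulLE 𝕜 n (2 * m) := by
  intro X
  set Q := Xᴴ * X
  set P := X * Xᴴ
  have hQ : Q.IsHermitian := isHermitian_conjTranspose_mul_self X
  have hP : P.IsHermitian := isHermitian_mul_conjTranspose_self X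
  have hQP : (Q ^ m * Q ^ m).trace = (P ^ m * P ^ m).trace := by
    rw [← pow_add, ← pow_add, trace_mul_pow_comm]
  calc re (X ^ (2 * (2 * m))).trace
      = re ((X ^ 2) ^ (2 * m)).trace := by rw [pow_mul]
    _ ≤ re (((X ^ 2)ᴴ * X ^ 2) ^ m).trace := hW (X ^ 2)
    _ = re ((Q * P) ^ m).trace := by
      rw [conjTranspose_pow, show Xᴴ ^ 2 * X ^ 2 = Xᴴ * (Xᴴ * X * X) by noncomm_ring,
        trace_mul_pow_comm, mul_assoc (Xᴴ * X)]
    _ ≤ re (Q ^ m * P ^ m).trace := hM Q P hQ hP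
    _ ≤ re (Q ^ m * Q ^ m).trace := (hQ.pow m).re_trace_mul_le (hP.pow m) (by rw [hQP])
    _ = re (Q ^ (2 * m)).trace := by rw [_root_.two_mul, pow_add]

theorem traceMulPowLE_two_pow (k : ℕ) : TraceMulPowLE 𝕜 n (2 ^ k) := by
  suffices TracePowTwoMulLE 𝕜 n (2 ^ k) ∧ TraceMulPowLE 𝕜 n (2 ^ k) from this.2
  induction k with
  | zero => exact ⟨tracePowTwoMulLE_one, traceMulPowLE_one⟩
  | succ k ih =>
    rw [pow_succ']
    exact ⟨ih.1.two_mul ih.2, ih.2.two_mul ih.1⟩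

end TwoPow

end Matrix

/-- For `N × N` complex Hermitian matrices `A`, `B` and an integer `k ≥ 0`,
`Tr ((AB)^{2^k}) ≤ Tr (A^{2^k} B^{2^k})`; both traces are real numbers. -/
theorem trace_pow_two_pow_le (N k : ℕ) (A B : Matrix (Fin N) (Fin N) ℂ)
    (hA : A.IsHermitian) (hB : B.IsHermitian) :
    (Matrix.trace ((A * B) ^ 2 ^ k)).im = 0 ∧
    (Matrix.trace (A ^ 2 ^ k * B ^ 2 ^ k)).im = 0 ∧
    (Matrix.trace ((A * B) ^ 2 ^ k)).re ≤ (Matrix.trace (A ^ 2 ^ k * B ^ 2 ^ k)).re :=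
  ⟨hA.im_trace_mul_pow hB _,
    by simpa using (hA.pow (2 ^ k)).im_trace_mul_pow (hB.pow (2 ^ k)) 1,
    Matrix.traceMulPowLE_two_pow k A B hA hB⟩
end

section
/- (Hardy–Littlewood–Pólya / Karamata majorization lemma, weak form) Let a₁, …, a_m and b₁, …, b_m be real numbers with b₁ ≥ b₂ ≥ ⋯ ≥ b_m, and suppose b₁ + ⋯ + b_q ≤ a₁ + ⋯ + a_q for every q = 1, …, m. Then for every convex increasing function ω : ℝ → ℝ, ω(b₁) + ⋯ + ω(b_m) ≤ ω(a₁) + ⋯ + ω(a_m). -/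
/-!
Let `c i` be the right derivative of `ω` at `b i`. Convexity gives the supporting-line bound
`ω (a i) - ω (b i) ≥ c i * (a i - b i)`. Since `b` is decreasing and `ω` is convex and increasing,
`c` is decreasing and nonnegative, so Abel summation writes `∑ c i * (a i - b i)` as a
nonnegative combination of the partial sums of `a - b`, which are nonnegative by hypothesis.
-/

open Finset Set

namespace Finset

theorem sum_mul_nonneg_of_antitoneOn {ι R : Type*} [LinearOrder ι] [CommRing R] [PartialOrder R]
    [IsOrderedRing R] {s : Finset ι} {c d : ι → R} (hc : AntitoneOn c s)
    (hc₀ : ∀ i ∈ s, 0 ≤ c i) (hd : ∀ j ∈ s, 0 ≤ ∑ i ∈ s with i ≤ j, d i) :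
    0 ≤ ∑ i ∈ s, c i * d i := by
  induction s using Finset.induction_on_max generalizing c with
  | empty => simp
  | insert M s hlt ih =>
    have hM : M ∈ insert M s := mem_insert_self M s
    have hprefix : ∀ j ∈ s, (∑ i ∈ insert M s with i ≤ j, d i) = ∑ i ∈ s with i ≤ j, d i :=
      fun j hj => by rw [filter_insert, if_neg (hlt j hj).not_ge]
    -- Peel off the smallest weight `c M`: the rest has antitone nonnegative weights `c i - c M`.
    have hsplit : ∑ i ∈ insert M s, c i * d i =
        ∑ i ∈ s, (c i - c M) * d i + c M * ∑ i ∈ insert M s with i ≤ M, d i := by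
      have hall : (insert M s).filter (· ≤ M) = insert M s :=
        filter_true_of_mem fun i hi => (mem_insert.1 hi).elim le_of_eq fun h => (hlt i h).le
      have hMs : M ∉ s := fun h => lt_irrefl M (hlt M h)
      rw [hall, sum_insert hMs, sum_insert hMs, mul_add, mul_sum]
      simp only [sub_mul, sum_sub_distrib]
      ring
    rw [hsplit]
    refine add_nonneg (ih ?_ ?_ ?_) (mul_nonneg (hc₀ M hM) (hd M hM))
    · intro i hi j hj hij
      exact sub_le_sub_right (hc (mem_insert_of_mem hi) (mem_insert_of_mem hj) hij) _
    · intro i hi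
      exact sub_nonneg.2 (hc (mem_insert_of_mem hi) hM (hlt i hi).le)
    · intro j hj
      rw [← hprefix j hj]
      exact hd j (mem_insert_of_mem hj)

end Finset

namespace ConvexOn

variable {S : Set ℝ} {f : ℝ → ℝ} {x y : ℝ}

theorem add_rightDeriv_mul_sub_le (hf : ConvexOn ℝ S f) (hx : x ∈ interior S) (hy : y ∈ S) :
    f x + derivWithin f (Ioi x) x * (y - x) ≤ f y := by
  rcases lt_trichotomy x y with hxy | rfl | hyx
  · have h := hf.rightDeriv_le_slope_of_mem_interior hx hy hxy
    rw [slope_def_field, le_div_iff₀ (sub_pos.2 hxy)] at h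
    linarith
  · simp
  · have h := (hf.slope_le_leftDeriv_of_mem_interior hy hx hyx).trans
      (hf.leftDeriv_le_rightDeriv_of_mem_interior hx)
    rw [slope_def_field, div_le_iff₀ (sub_pos.2 hyx)] at h
    linarith

end ConvexOn

/-- **Hardy–Littlewood–Pólya / Karamata majorization lemma (weak form).** If `b₁ ≥ ⋯ ≥ b_m` and
`b₁ + ⋯ + b_q ≤ a₁ + ⋯ + a_q` for every `q = 1, …, m`, then for every convex increasing
`ω : ℝ → ℝ` one has `ω(b₁) + ⋯ + ω(b_m) ≤ ω(a₁) + ⋯ + ω(a_m)`. -/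
theorem karamata_weak_majorization (m : ℕ) (a b : Fin m → ℝ)
    (hb : ∀ i j : Fin m, i ≤ j → b j ≤ b i)
    (hab : ∀ q : ℕ, 1 ≤ q → q ≤ m →
      ∑ i ∈ Finset.univ.filter (fun i : Fin m => (i : ℕ) < q), b i ≤
        ∑ i ∈ Finset.univ.filter (fun i : Fin m => (i : ℕ) < q), a i)
    (ω : ℝ → ℝ) (hconv : ConvexOn ℝ Set.univ ω) (hmono : Monotone ω) :
    ∑ i, ω (b i) ≤ ∑ i, ω (a i) := by
  set c : Fin m → ℝ := fun i => derivWithin ω (Ioi (b i)) (b i)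
  have hsupport (i : Fin m) : c i * (a i - b i) ≤ ω (a i) - ω (b i) := by
    have := hconv.add_rightDeriv_mul_sub_le (x := b i) (by simp) (mem_univ (a i))
    linarith
  have hprefix (j : Fin m) : 0 ≤ ∑ i with i ≤ j, (a i - b i) := by
    have hfilter : univ.filter (fun i : Fin m => (i : ℕ) < j + 1) = univ.filter (· ≤ j) := by
      refine filter_congr fun i _ => ?_
      rw [Nat.lt_succ_iff, Fin.le_def]
    have := hab (j + 1) (by omega) j.isLt
    rw [hfilter] at this
    rw [sum_sub_distrib]
    linarith
  have hweighted : 0 ≤ ∑ i, c i * (a i - b i) :=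
    sum_mul_nonneg_of_antitoneOn
      (fun i _ j _ hij => hconv.monotoneOn_rightDeriv (by simp) (by simp) (hb i j hij))
      (fun i _ => (hmono.monotoneOn _).derivWithin_nonneg) (fun j _ => hprefix j)
  have := hweighted.trans (sum_le_sum fun i _ => hsupport i)
  rw [sum_sub_distrib] at this
  linarith
end

section
/- (Lie–Trotter product formula for matrices) Let A and B be N×N complex matrices. Then the sequence (e^{A/n} e^{B/n})^n converges, as n → ∞, to e^{A+B}. -/
/-!
Chernoff's product formula: if `f 0 = 1` and `f` has derivative `f'` at `0`, then
`f (1/n) ^ n → exp f'`. Write `f (1/n) = 1 + Lₙ/n` with `Lₙ → f'` and compare `(1 + Lₙ/n)^n` with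
`exp (Lₙ/n) ^ n = exp Lₙ`. Both bases have norm at most `M = exp (‖Lₙ‖/n)` and differ by
`‖exp z - 1 - z‖ = O(1/n²)`, so the telescoping bound `‖aⁿ - bⁿ‖ ≤ n Mⁿ⁻¹ ‖a - b‖` makes the powers
differ by `O(1/n)`. Lie–Trotter is the case `f t = exp (t • A) * exp (t • B)`, with `f' = A + B`,
for matrices carrying the `L∞` operator norm (submultiplicative, with `‖1‖ = 1` once `N > 0`).
-/

open Filter Topology NormedSpace Finset
open scoped Nat

theorem Rat.norm_natCast (n : ℕ) : ‖(n : ℚ)‖ = n := by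
  rw [← Rat.norm_cast_real, Rat.cast_natCast, Real.norm_natCast]

section

variable {𝔸 : Type*} [NormedRing 𝔸] [NormOneClass 𝔸]

theorem norm_pow_sub_pow_le {a b : 𝔸} {M : ℝ} (ha : ‖a‖ ≤ M) (hb : ‖b‖ ≤ M) (n : ℕ) :
    ‖a ^ n - b ^ n‖ ≤ n * M ^ (n - 1) * ‖a - b‖ := by
  have hM : 0 ≤ M := (norm_nonneg a).trans ha
  induction n with
  | zero => simp
  | succ n ih =>
    have htelescope : a ^ (n + 1) - b ^ (n + 1) = a ^ n * (a - b) + (a ^ n - b ^ n) * b := by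
      noncomm_ring
    have hpow : ‖a ^ n‖ ≤ M ^ n := (norm_pow_le a n).trans (pow_le_pow_left₀ (norm_nonneg a) ha n)
    calc ‖a ^ (n + 1) - b ^ (n + 1)‖
        ≤ ‖a ^ n‖ * ‖a - b‖ + ‖a ^ n - b ^ n‖ * ‖b‖ := by
          rw [htelescope]
          exact (norm_add_le _ _).trans (add_le_add (norm_mul_le _ _) (norm_mul_le _ _))
      _ ≤ M ^ n * ‖a - b‖ + n * M ^ (n - 1) * ‖a - b‖ * M := by gcongr
      _ = (n + 1 : ℕ) * M ^ (n + 1 - 1) * ‖a - b‖ := by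
          rcases n with _ | n
          · simp
          · push_cast; simp only [pow_succ]; ring

variable [NormedAlgebra ℚ 𝔸]

theorem norm_inv_factorial_smul_pow_le (x : 𝔸) (n : ℕ) :
    ‖(n !⁻¹ : ℚ) • x ^ n‖ ≤ ‖x‖ ^ n / n ! := by
  rw [norm_smul, norm_inv, Rat.norm_natCast, inv_mul_eq_div]
  gcongr
  exact norm_pow_le x n

variable [CompleteSpace 𝔸]

theorem norm_exp_sub_sum_le (x : 𝔸) (k : ℕ) :
    ‖exp x - ∑ i ∈ range k, (i !⁻¹ : ℚ) • x ^ i‖ ≤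
      Real.exp ‖x‖ - ∑ i ∈ range k, ‖x‖ ^ i / i ! := by
  have hreal : HasSum (fun n => ‖x‖ ^ n / n !) (Real.exp ‖x‖) := by
    rw [Real.exp_eq_exp_ℝ]
    exact expSeries_div_hasSum_exp ‖x‖
  exact ((hasSum_nat_add_iff' k).mpr (exp_series_hasSum_exp' (𝕂 := ℚ) x)).norm_le_of_bounded
    ((hasSum_nat_add_iff' k).mpr hreal) fun i => norm_inv_factorial_smul_pow_le x (i + k)

theorem norm_exp_le_exp_norm (x : 𝔸) : ‖exp x‖ ≤ Real.exp ‖x‖ := by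
  simpa using norm_exp_sub_sum_le x 0

theorem norm_exp_sub_one_sub_le_sq {x : 𝔸} (hx : ‖x‖ ≤ 1) : ‖exp x - 1 - x‖ ≤ ‖x‖ ^ 2 := by
  calc ‖exp x - 1 - x‖ ≤ Real.exp ‖x‖ - 1 - ‖x‖ := by
        simpa [sum_range_succ, sub_sub] using norm_exp_sub_sum_le x 2
    _ ≤ ‖x‖ ^ 2 := by
        simpa using (abs_le.mp (Real.abs_exp_sub_one_sub_id_le (x := ‖x‖) (by simpa using hx))).2

theorem norm_one_add_inv_smul_pow_sub_exp_le {x : 𝔸} {n : ℕ} (hx : ‖x‖ ≤ n) :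
    ‖(1 + (n : ℚ)⁻¹ • x) ^ n - exp x‖ ≤ Real.exp ‖x‖ * ‖x‖ ^ 2 / n := by
  obtain rfl | hn := n.eq_zero_or_pos
  · simp [norm_le_zero_iff.mp (by simpa using hx)]
  set z := (n : ℚ)⁻¹ • x
  have hz : ‖z‖ = ‖x‖ / n := by rw [norm_smul, norm_inv, Rat.norm_natCast, inv_mul_eq_div]
  have hz1 : ‖z‖ ≤ 1 := by rw [hz]; exact div_le_one_of_le₀ hx (Nat.cast_nonneg n)
  have hexp_pow : exp x = exp z ^ n := by
    rw [← exp_nsmul, ← Nat.cast_smul_eq_nsmul ℚ, smul_smul, mul_inv_cancel₀ (by positivity),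
      one_smul]
  set M := Real.exp ‖z‖
  have hM : ‖1 + z‖ ≤ M :=
    (norm_add_le _ _).trans (by rw [norm_one]; linarith [Real.add_one_le_exp ‖z‖])
  have hMn : M ^ (n - 1) ≤ Real.exp ‖x‖ :=
    calc M ^ (n - 1) ≤ M ^ n := pow_le_pow_right₀ (Real.one_le_exp (norm_nonneg z)) (n.sub_le 1)
      _ = Real.exp ‖x‖ := by rw [← Real.exp_nat_mul, hz]; field_simp
  calc ‖(1 + z) ^ n - exp x‖
      ≤ n * M ^ (n - 1) * ‖1 + z - exp z‖ :=
        hexp_pow ▸ norm_pow_sub_pow_le hM (norm_exp_le_exp_norm z) n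
    _ ≤ n * Real.exp ‖x‖ * ‖z‖ ^ 2 := by
        rw [← norm_neg, show -(1 + z - exp z) = exp z - 1 - z by abel]
        gcongr
        exact norm_exp_sub_one_sub_le_sq hz1
    _ = Real.exp ‖x‖ * ‖x‖ ^ 2 / n := by rw [hz]; field_simp

theorem tendsto_pow_of_tendsto_nsmul_sub_one {T : ℕ → 𝔸} {L : 𝔸}
    (hT : Tendsto (fun n => n • (T n - 1)) atTop (𝓝 L)) :
    Tendsto (fun n => T n ^ n) atTop (𝓝 (exp L)) := by
  set K := ‖L‖ + 1
  have hK : ∀ᶠ n in atTop, ‖n • (T n - 1)‖ ≤ K :=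
    hT.norm.eventually (eventually_le_nhds (lt_add_one _))
  have hclose : Tendsto (fun n => T n ^ n - exp (n • (T n - 1))) atTop (𝓝 0) := by
    refine squeeze_zero_norm' ?_ (tendsto_const_div_atTop_nhds_zero_nat (Real.exp K * K ^ 2))
    filter_upwards [hK, eventually_ge_atTop ⌈K⌉₊, eventually_ne_atTop 0] with n hKn hn hn0
    have hT_eq : T n = 1 + (n : ℚ)⁻¹ • (n • (T n - 1)) := by
      rw [← Nat.cast_smul_eq_nsmul ℚ, smul_smul, inv_mul_cancel₀ (Nat.cast_ne_zero.mpr hn0),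
        one_smul, add_sub_cancel]
    calc ‖T n ^ n - exp (n • (T n - 1))‖
        ≤ Real.exp ‖n • (T n - 1)‖ * ‖n • (T n - 1)‖ ^ 2 / n := by
          simpa only [← hT_eq] using
            norm_one_add_inv_smul_pow_sub_exp_le (hKn.trans (Nat.ceil_le.mp hn))
      _ ≤ Real.exp K * K ^ 2 / n := by gcongr
  simpa using hclose.add hT.exp

end

theorem tendsto_pow_inv_natCast_of_hasDerivAt {𝕂 𝔸 : Type*} [RCLike 𝕂] [NormedRing 𝔸]
    [NormOneClass 𝔸] [NormedAlgebra 𝕂 𝔸] [CompleteSpace 𝔸]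
    {f : 𝕂 → 𝔸} {f' : 𝔸} (h0 : f 0 = 1) (hf : HasDerivAt f f' 0) :
    Tendsto (fun n : ℕ => f (n : 𝕂)⁻¹ ^ n) atTop (𝓝 (exp f')) := by
  -- `NormedSpace.exp` is built from the (unique) `ℚ`-algebra structure
  let : NormedAlgebra ℚ 𝔸 := NormedAlgebra.restrictScalars ℚ 𝕂 𝔸
  have hinv : Tendsto (fun n : ℕ => (n : 𝕂)⁻¹) atTop (𝓝[≠] 0) :=
    tendsto_nhdsWithin_iff.mpr ⟨tendsto_inv_atTop_nhds_zero_nat,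
      (eventually_ne_atTop 0).mono fun n hn => by simpa using hn⟩
  refine tendsto_pow_of_tendsto_nsmul_sub_one ?_
  simpa [h0, Function.comp_def, Nat.cast_smul_eq_nsmul] using hf.tendsto_slope_zero.comp hinv

/-- **The Lie–Trotter product formula for matrices.** For `N × N` complex matrices `A` and `B`,
`(e^{A/n} e^{B/n})^n → e^{A+B}` as `n → ∞`. -/
theorem lie_trotter (N : ℕ) (A B : Matrix (Fin N) (Fin N) ℂ) :
    Filter.Tendsto
      (fun n : ℕ =>
        (NormedSpace.exp ((n : ℂ)⁻¹ • A) * NormedSpace.exp ((n : ℂ)⁻¹ • B)) ^ n)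
      Filter.atTop (nhds (NormedSpace.exp (A + B))) := by
  rcases isEmpty_or_nonempty (Fin N) with _ | _
  · exact tendsto_const_nhds.congr fun _ => Subsingleton.elim _ _
  let := Matrix.linftyOpNormedRing (n := Fin N) (α := ℂ)
  let := Matrix.linftyOpNormedAlgebra (R := ℂ) (n := Fin N) (α := ℂ)
  have := Matrix.linfty_opNormOneClass (n := Fin N) (α := ℂ)
  refine tendsto_pow_inv_natCast_of_hasDerivAt (f := fun t : ℂ => exp (t • A) * exp (t • B))
    (by simp) ?_
  have hderiv := (hasDerivAt_exp_smul_const A (0 : ℂ)).fun_mul (hasDerivAt_exp_smul_const B 0)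
  simp only [zero_smul, exp_zero, one_mul, mul_one] at hderiv
  exact hderiv
end

section
/- (Segal) Let A and B be N×N complex Hermitian matrices. Then ‖e^{A+B}‖ ≤ ‖e^A e^B‖, where ‖·‖ denotes the ℓ²→ℓ² operator norm on N×N complex matrices. -/
/-
In a C⋆-algebra `‖x y‖² = ‖y⋆ x⋆ x y‖` is the spectral radius of the self-adjoint element
`y⋆ (x⋆ x y)`, which equals that of `(x⋆ x y) y⋆` and is therefore at most `‖x⋆ x y y⋆‖`. For
self-adjoint `x, y` iterating gives `‖x y‖ ^ 2 ^ k ≤ ‖x ^ 2 ^ k * y ^ 2 ^ k‖`; with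
`x = e^{a/2^k}`, `y = e^{b/2^k}` the right side is `‖e^a e^b‖`. On the other hand
`‖e^{a+b}‖ = ‖e^{(a+b)/2^k}‖ ^ 2 ^ k` because `e^{(a+b)/2^k}` is self-adjoint. Since
`e^{ta} e^{tb} - e^{t(a+b)} = o(t)`, the two `2^k`-th powers differ by a factor
`exp (2^k o(2^{-k})) → 1`.
-/

open NormedSpace Filter Topology

theorem isLittleO_exp_smul_mul_exp_smul_sub_exp_smul {𝕂 𝔸 : Type*} [RCLike 𝕂] [NormedRing 𝔸]
    [NormedAlgebra 𝕂 𝔸] [CompleteSpace 𝔸] (x y : 𝔸) :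
    (fun t : 𝕂 => exp (t • x) * exp (t • y) - exp (t • (x + y))) =o[𝓝 0] fun t => t := by
  have hderiv : HasDerivAt (fun t : 𝕂 => exp (t • x) * exp (t • y) - exp (t • (x + y))) 0 0 := by
    simpa using ((hasDerivAt_exp_smul_const x (0 : 𝕂)).fun_mul
      (hasDerivAt_exp_smul_const y (0 : 𝕂))).fun_sub (hasDerivAt_exp_smul_const (x + y) (0 : 𝕂))
  simpa using hderiv.isLittleO

theorem spectralRadius_mul_comm {𝕜 A : Type*} [NormedField 𝕜] [Ring A] [Algebra 𝕜 A] (a b : A) :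
    spectralRadius 𝕜 (a * b) = spectralRadius 𝕜 (b * a) := by
  suffices h : ∀ a b : A, spectralRadius 𝕜 (a * b) ≤ spectralRadius 𝕜 (b * a) from
    (h a b).antisymm (h b a)
  intro a b
  refine iSup₂_le fun k hk => ?_
  by_cases hk0 : k = 0
  · simp [hk0]
  · have hk' : k ∈ spectrum 𝕜 (b * a) \ {0} :=
      spectrum.nonzero_mul_comm (𝕜 := 𝕜) a b ▸ ⟨hk, hk0⟩
    exact le_iSup₂ (f := fun k (_ : k ∈ spectrum 𝕜 (b * a)) => (‖k‖₊ : ENNReal)) k hk'.1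

theorem pow_le_pow_mul_exp_of_le_add {q d ε : ℝ} (n : ℕ) (hq : 0 ≤ q) (hd : 0 < d)
    (h : q ≤ d + ε) : q ^ n ≤ d ^ n * Real.exp (n * ε / d) := by
  have hstep : q ≤ d * Real.exp (ε / d) := by
    calc q ≤ d * (ε / d + 1) := by rwa [mul_add, mul_div_cancel₀ _ hd.ne', mul_one, add_comm]
      _ ≤ d * Real.exp (ε / d) := by gcongr; exact Real.add_one_le_exp _
  calc q ^ n ≤ (d * Real.exp (ε / d)) ^ n := by gcongr
    _ = d ^ n * Real.exp (n * ε / d) := by rw [mul_pow, ← Real.exp_nat_mul, mul_div_assoc]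

section CStar
variable {A : Type*} [CStarAlgebra A]

theorem CStarRing.norm_mul_sq_le (x y : A) : ‖x * y‖ ^ 2 ≤ ‖star x * x * (y * star y)‖ := by
  rcases subsingleton_or_nontrivial A with _ | _
  · simp [Subsingleton.elim (x * y) 0]
  have hsa : IsSelfAdjoint (star y * (star x * x * y)) := by
    simpa [mul_assoc] using IsSelfAdjoint.star_mul_self (x * y)
  have hr : (‖star y * (star x * x * y)‖₊ : ENNReal) ≤ ‖star x * x * (y * star y)‖₊ := by
    rw [← hsa.spectralRadius_eq_nnnorm, spectralRadius_mul_comm, mul_assoc]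
    exact spectrum.spectralRadius_le_nnnorm _
  calc ‖x * y‖ ^ 2 = ‖star y * (star x * x * y)‖ := by
        rw [sq, ← CStarRing.norm_star_mul_self, star_mul]; simp only [mul_assoc]
    _ ≤ _ := mod_cast hr

theorem IsSelfAdjoint.norm_mul_pow_two_pow_le {x y : A} (hx : IsSelfAdjoint x)
    (hy : IsSelfAdjoint y) (k : ℕ) : ‖x * y‖ ^ 2 ^ k ≤ ‖x ^ 2 ^ k * y ^ 2 ^ k‖ := by
  induction k with
  | zero => simp
  | succ k ih =>
    calc ‖x * y‖ ^ 2 ^ (k + 1) = (‖x * y‖ ^ 2 ^ k) ^ 2 := by rw [pow_succ, pow_mul]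
      _ ≤ ‖x ^ 2 ^ k * y ^ 2 ^ k‖ ^ 2 := by gcongr
      _ ≤ ‖x ^ 2 ^ (k + 1) * y ^ 2 ^ (k + 1)‖ := by
        have h := CStarRing.norm_mul_sq_le (x ^ 2 ^ k) (y ^ 2 ^ k)
        rwa [(hx.pow _).star_eq, (hy.pow _).star_eq, ← pow_two, ← pow_two, ← pow_mul, ← pow_mul,
          ← pow_succ] at h

theorem norm_exp_two_pow_nsmul_add_le_of_isSelfAdjoint [Nontrivial A] {x y : A}
    (hx : IsSelfAdjoint x) (hy : IsSelfAdjoint y) (k : ℕ) :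
    ‖exp (2 ^ k • (x + y))‖ ≤ ‖exp (2 ^ k • x) * exp (2 ^ k • y)‖ *
      Real.exp (2 ^ k * ‖exp x * exp y - exp (x + y)‖ / ‖exp x * exp y‖) := by
  let +nondep : NormedAlgebra ℚ A := .restrictScalars ℚ ℂ A
  have hpos : 0 < ‖exp x * exp y‖ :=
    norm_pos_iff.2 ((isUnit_exp x).mul (isUnit_exp y)).ne_zero
  have htri : ‖exp (x + y)‖ ≤ ‖exp x * exp y‖ + ‖exp x * exp y - exp (x + y)‖ :=
    norm_le_insert _ _
  calc ‖exp (2 ^ k • (x + y))‖ = ‖exp (x + y)‖ ^ 2 ^ k := by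
        rw [exp_nsmul, (hx.add hy).exp.norm_pow_two_pow]
    _ ≤ ‖exp x * exp y‖ ^ 2 ^ k *
          Real.exp (2 ^ k * ‖exp x * exp y - exp (x + y)‖ / ‖exp x * exp y‖) := by
        simpa using pow_le_pow_mul_exp_of_le_add (2 ^ k) (norm_nonneg _) hpos htri
    _ ≤ _ := by
        gcongr
        rw [exp_nsmul, exp_nsmul]
        exact hx.exp.norm_mul_pow_two_pow_le hy.exp k

theorem norm_exp_add_le_of_isSelfAdjoint {a b : A} (ha : IsSelfAdjoint a)
    (hb : IsSelfAdjoint b) : ‖exp (a + b)‖ ≤ ‖exp a * exp b‖ := by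
  let +nondep : NormedAlgebra ℚ A := .restrictScalars ℚ ℂ A
  rcases subsingleton_or_nontrivial A with _ | _
  · rw [Subsingleton.elim (exp (a + b)) (exp a * exp b)]
  set t : ℕ → ℝ := fun k => (2 ^ k)⁻¹
  set d : ℝ → ℝ := fun s => ‖exp (s • a) * exp (s • b)‖
  set ε : ℝ → ℝ := fun s => ‖exp (s • a) * exp (s • b) - exp (s • (a + b))‖
  have ht : Tendsto t atTop (𝓝 0) :=
    tendsto_inv_atTop_zero.comp (tendsto_pow_atTop_atTop_of_one_lt one_lt_two)
  have hrescale : ∀ k (v : A), 2 ^ k • t k • v = v := by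
    intro k v
    rw [← Nat.cast_smul_eq_nsmul ℝ, smul_smul, Nat.cast_pow, Nat.cast_ofNat,
      mul_inv_cancel₀ (by positivity), one_smul]
  have hbound : ∀ k, ‖exp (a + b)‖ ≤ ‖exp a * exp b‖ * Real.exp (2 ^ k * ε (t k) / d (t k)) := by
    intro k
    simpa [ε, d, hrescale, smul_add] using
      norm_exp_two_pow_nsmul_add_le_of_isSelfAdjoint ((IsSelfAdjoint.all (t k)).smul ha)
        ((IsSelfAdjoint.all (t k)).smul hb) k
  have hd : Tendsto d (𝓝 0) (𝓝 1) := by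
    have hcont : Continuous d := by fun_prop
    simpa [d] using hcont.tendsto 0
  have hε : Tendsto (fun k => 2 ^ k * ε (t k)) atTop (𝓝 0) := by
    refine ((isLittleO_exp_smul_mul_exp_smul_sub_exp_smul (𝕂 := ℝ) a b).norm_left
      |>.tendsto_div_nhds_zero.comp ht).congr fun k => ?_
    simp [t, ε, div_inv_eq_mul, mul_comm]
  have hlim : Tendsto (fun k => ‖exp a * exp b‖ * Real.exp (2 ^ k * ε (t k) / d (t k))) atTop
      (𝓝 ‖exp a * exp b‖) := by
    simpa using tendsto_const_nhds.mul ((hε.div (hd.comp ht) one_ne_zero).rexp)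
  exact ge_of_tendsto' hlim hbound

end CStar

open scoped Matrix.Norms.L2Operator

/-- **Segal's inequality.** For `N × N` complex Hermitian matrices `A` and `B`,
`‖e^{A+B}‖ ≤ ‖e^A e^B‖` in the `ℓ² → ℓ²` operator norm. -/
theorem segal_inequality (N : ℕ) (A B : Matrix (Fin N) (Fin N) ℂ)
    (hA : A.IsHermitian) (hB : B.IsHermitian) :
    ‖NormedSpace.exp (A + B)‖ ≤ ‖NormedSpace.exp A * NormedSpace.exp B‖ :=
  norm_exp_add_le_of_isSelfAdjoint hA.isSelfAdjoint hB.isSelfAdjoint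
end
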